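/- Let x_1,…,x_L be real numbers, let η_1,…,η_L be i.i.d. Laplace(b) noise, and let c_k be the k-th largest value among x_1,…,x_L. Let a be the set of k indices with the largest noisy values x_i + η_i. If b ≤ α/(2(ln L + ln(k/β))), then for any fixed index i with x_i < c_k − α, the probability that i ∈ a is at most β/k. -/

import Mathlib

/-!
If `i` is selected although `x i < c_k - α`, then, since at least `k` indices have count `≥ c_k`
and only `k - 1` other indices are selected, some index `j` with `x j ≥ c_k` loses to `i`.
Hence `η_i - η_j > α`, so `η_i ≥ α / 2` or `η_j ≤ -α / 2`. A union bound over these `L + 1`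
Laplace tails bounds the probability by `(L + 1) e^{-α/(2b)} / 2 ≤ L e^{-α/(2b)}`, and the
condition on `b` says exactly `e^{-α/(2b)} ≤ β / (L k)`.
-/

open MeasureTheory

noncomputable def laplace (b : ℝ) : Measure ℝ :=
  volume.withDensity fun z => ENNReal.ofReal ((1 / (2 * b)) * Real.exp (-|z| / b))

open Set

lemma laplace_Ioi {b : ℝ} (hb : 0 < b) {t : ℝ} (ht : 0 ≤ t) :
    laplace b (Ioi t) = ENNReal.ofReal (Real.exp (-t / b) / 2) := by
  have hdens : ∀ z ∈ Ioi t, ENNReal.ofReal (1 / (2 * b) * Real.exp (-|z| / b))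
      = ENNReal.ofReal (1 / (2 * b) * Real.exp (-b⁻¹ * z)) := by
    intro z hz
    rw [abs_of_pos (ht.trans_lt hz)]
    ring_nf
  have hneg : -b⁻¹ < 0 := neg_neg_of_pos (inv_pos.2 hb)
  rw [laplace, withDensity_apply _ measurableSet_Ioi,
    setLIntegral_congr_fun measurableSet_Ioi hdens,
    ← ofReal_integral_eq_lintegral_ofReal ((integrableOn_exp_mul_Ioi hneg t).const_mul _)
      (ae_of_all _ fun _ => by positivity),
    integral_const_mul, integral_exp_mul_Ioi hneg]
  congr 1
  field_simp

instance nullSingletonClass_laplace (b : ℝ) : NullSingletonClass (laplace b) := by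
  unfold laplace
  infer_instance

lemma laplace_Ici {b : ℝ} (hb : 0 < b) {t : ℝ} (ht : 0 ≤ t) :
    laplace b (Ici t) = ENNReal.ofReal (Real.exp (-t / b) / 2) := by
  rw [← measure_congr Ioi_ae_eq_Ici, laplace_Ioi hb ht]

lemma laplace_Iic_neg (b t : ℝ) : laplace b (Iic (-t)) = laplace b (Ici t) := by
  rw [laplace, withDensity_apply _ measurableSet_Iic, withDensity_apply _ measurableSet_Ici]
  nth_rw 1 [← (Measure.measurePreserving_neg (volume : Measure ℝ)).map_eq]
  rw [setLIntegral_map measurableSet_Iic (by fun_prop) measurable_neg, neg_preimage, neg_Iic,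
    neg_neg]
  simp only [abs_neg]

lemma isProbabilityMeasure_laplace {b : ℝ} (hb : 0 < b) : IsProbabilityMeasure (laplace b) := by
  constructor
  rw [← Iic_union_Ioi (a := 0), measure_union (Iic_disjoint_Ioi le_rfl) measurableSet_Ioi,
    ← neg_zero, laplace_Iic_neg, neg_zero, laplace_Ici hb le_rfl, laplace_Ioi hb le_rfl,
    ← ENNReal.ofReal_add (by positivity) (by positivity)]
  norm_num

lemma pi_laplace_tails_le {ι : Type*} [Fintype ι] {b t : ℝ} (hb : 0 < b) (ht : 0 ≤ t) (i : ι) :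
    Measure.pi (fun _ : ι => laplace b)
        (Function.eval i ⁻¹' Ici t ∪ ⋃ j, Function.eval j ⁻¹' Iic (-t))
      ≤ ENNReal.ofReal ((1 + Fintype.card ι) * (Real.exp (-t / b) / 2)) := by
  have := isProbabilityMeasure_laplace hb
  have hmarg : ∀ j (s : Set ℝ), MeasurableSet s →
      Measure.pi (fun _ : ι => laplace b) (Function.eval j ⁻¹' s) = laplace b s :=
    fun j s hs => (measurePreserving_eval _ j).measure_preimage hs.nullMeasurableSet
  calc _ ≤ laplace b (Ici t) + ∑ j : ι, laplace b (Iic (-t)) := by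
        refine (measure_union_le _ _).trans (add_le_add (hmarg i _ measurableSet_Ici).le ?_)
        exact (measure_iUnion_fintype_le _ _).trans
          (Finset.sum_le_sum fun j _ => (hmarg j _ measurableSet_Iic).le)
    _ = _ := by
        rw [laplace_Iic_neg, laplace_Ici hb ht, Finset.sum_const, Finset.card_univ, nsmul_eq_mul,
          ENNReal.ofReal_mul (by positivity), ← one_add_mul]
        congr 1
        rw [ENNReal.ofReal_add zero_le_one (by positivity)]
        simp

lemma exists_notMem_le_of_card_le {ι : Type*} [Fintype ι] {s : Finset ι} {x : ι → ℝ} {c : ℝ}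
    (hcard : s.card ≤ (Finset.univ.filter fun j => c ≤ x j).card) {i : ι} (hi : i ∈ s)
    (hxi : x i < c) : ∃ j ∉ s, c ≤ x j := by
  classical
  have hlt : (s.erase i).card < (Finset.univ.filter fun j => c ≤ x j).card := by
    have := Finset.card_pos.2 ⟨i, hi⟩
    rw [Finset.card_erase_of_mem hi]
    omega
  obtain ⟨j, hjc, hjs⟩ := Finset.exists_mem_notMem_of_card_lt_card hlt
  have hcj : c ≤ x j := (Finset.mem_filter.1 hjc).2
  exact ⟨j, fun hj => hjs (Finset.mem_erase.2 ⟨fun hji => hxi.not_ge (hji ▸ hcj), hj⟩), hcj⟩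

lemma noise_tail_of_mem_top {ι : Type*} [Fintype ι] {s : Finset ι} {x ω : ι → ℝ} {c α : ℝ}
    (hcard : s.card ≤ (Finset.univ.filter fun j => c ≤ x j).card)
    (htop : ∀ i ∈ s, ∀ j ∉ s, x j + ω j ≤ x i + ω i) {i : ι} (hi : i ∈ s) (hα : 0 ≤ α)
    (hxi : x i < c - α) :
    α / 2 ≤ ω i ∨ ∃ j, ω j ≤ -(α / 2) := by
  obtain ⟨j, hjs, hcj⟩ := exists_notMem_le_of_card_le hcard hi (by linarith)
  have := htop i hi j hjs
  by_cases h : α / 2 ≤ ω i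
  · exact Or.inl h
  · exact Or.inr ⟨j, by linarith⟩

lemma exp_neg_div_le_inv {α b N : ℝ} (hα : 0 < α) (hb : 0 < b) (hN : 0 < N)
    (hble : b ≤ α / (2 * Real.log N)) : Real.exp (-(α / 2) / b) ≤ N⁻¹ := by
  have hlog : 0 < Real.log N := by
    by_contra! h
    exact hb.not_ge (hble.trans (div_nonpos_of_nonneg_of_nonpos hα.le (by linarith)))
  have hlog_le : Real.log N ≤ α / 2 / b := by
    rw [le_div_comm₀ hlog hb, div_div]
    exact hble
  rw [← Real.exp_log hN, ← Real.exp_neg, Real.exp_le_exp, neg_div]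
  exact neg_le_neg hlog_le

theorem noisy_topk_small_count_selected_general (L k : ℕ) (hk : 1 ≤ k)
    (x : Fin L → ℝ) (α β b : ℝ) (hα : 0 < α) (hβ0 : 0 < β)
    (hb : 0 < b) (hble : b ≤ α / (2 * (Real.log L + Real.log (k / β))))
    (ck : ℝ)
    (hck1 : k ≤ (Finset.univ.filter fun i => ck ≤ x i).card)
    (sel : (Fin L → ℝ) → Finset (Fin L))
    (hselcard : ∀ y, (sel y).card = k)
    (hseltop : ∀ y, ∀ i ∈ sel y, ∀ j, j ∉ sel y → y j ≤ y i)
    (i : Fin L) (hi : x i < ck - α) :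
    (Measure.pi fun _ : Fin L => laplace b)
        {ω | i ∈ sel fun j => x j + ω j} ≤ ENNReal.ofReal (β / k) := by
  have hL : (1 : ℝ) ≤ L := by exact_mod_cast i.pos
  have hk0 : (0 : ℝ) < k := by exact_mod_cast hk
  have hsub : {ω : Fin L → ℝ | i ∈ sel fun j => x j + ω j} ⊆
      Function.eval i ⁻¹' Ici (α / 2) ∪ ⋃ j, Function.eval j ⁻¹' Iic (-(α / 2)) := by
    intro ω hω
    rcases noise_tail_of_mem_top ((hselcard _).trans_le hck1) (hseltop _) hω hα.le hi
      with h | ⟨j, hj⟩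
    · exact Or.inl h
    · exact Or.inr (mem_iUnion.2 ⟨j, hj⟩)
  have hexp : Real.exp (-(α / 2) / b) ≤ (L * (k / β))⁻¹ := by
    refine exp_neg_div_le_inv hα hb (by positivity) ?_
    rwa [Real.log_mul (by positivity) (by positivity)]
  refine (measure_mono hsub).trans ((pi_laplace_tails_le hb (by positivity) i).trans ?_)
  refine ENNReal.ofReal_le_ofReal ?_
  calc (1 + (Fintype.card (Fin L) : ℝ)) * (Real.exp (-(α / 2) / b) / 2)
      ≤ (2 * L) * ((L * (k / β))⁻¹ / 2) := by
        rw [Fintype.card_fin]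
        gcongr
        linarith
    _ = β / k := by field_simp

/-- In noisy top-k selection with i.i.d. Laplace(b) noise,
`b ≤ α / (2(ln L + ln(k/β)))`, a fixed index whose true count is below
`c_k − α` is selected with probability at most `β/k`. -/
theorem noisy_topk_small_count_selected (L k : ℕ) (hk : 1 ≤ k) (hkL : k ≤ L)
    (x : Fin L → ℝ) (α β b : ℝ) (hα : 0 < α) (hβ0 : 0 < β) (hβ1 : β < 1)
    (hb : 0 < b) (hble : b ≤ α / (2 * (Real.log L + Real.log (k / β))))
    (ck : ℝ)
    (hck1 : k ≤ (Finset.univ.filter fun i => ck ≤ x i).card)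
    (hck2 : L - k + 1 ≤ (Finset.univ.filter fun i => x i ≤ ck).card)
    (sel : (Fin L → ℝ) → Finset (Fin L))
    (hselcard : ∀ y, (sel y).card = k)
    (hseltop : ∀ y, ∀ i ∈ sel y, ∀ j, j ∉ sel y → y j ≤ y i)
    (i : Fin L) (hi : x i < ck - α) :
    (Measure.pi fun _ : Fin L => laplace b)
        {ω | i ∈ sel fun j => x j + ω j} ≤ ENNReal.ofReal (β / k) :=
  noisy_topk_small_count_selected_general L k hk x α β b hα hβ0 hb hble ck hck1 sel hselcard hseltop
    i hi
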